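/- Let μ be a sub-probability measure (total mass ≤ 1) on a measurable space and X a nonnegative μ-integrable random variable. Then exp(∫ X dμ) ≤ 1 + ∫ e^X dμ. -/

import Mathlib

/-! Integrating the tangent line of `exp` at `I = ∫ X dμ`, namely `exp x ≥ exp I * (1 + (x - I))`,
gives `∫ exp X dμ ≥ exp I * (m * (1 - I) + I)` with `m = μ(Ω)`. The missing mass `1 - m ∈ [0, 1]`
then costs at most `exp I * (1 - I) * (1 - m) ≤ 1`, because `exp I * (1 - I) ≤ 1`. -/

open MeasureTheory Real

lemma Real.exp_mul_one_add_sub_le_exp (a x : ℝ) : exp a * (1 + (x - a)) ≤ exp x :=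
  calc exp a * (1 + (x - a)) ≤ exp a * exp (x - a) := by
        gcongr; linarith [add_one_le_exp (x - a)]
    _ = exp x := by rw [← exp_add, add_sub_cancel]

lemma Real.exp_mul_one_sub_le_one (x : ℝ) : exp x * (1 - x) ≤ 1 :=
  calc exp x * (1 - x) ≤ exp x * exp (-x) := by gcongr; exact one_sub_le_exp_neg x
    _ = 1 := by rw [← exp_add, add_neg_cancel, exp_zero]

lemma MeasureTheory.exp_integral_mul_le_integral_exp {α : Type*} [MeasurableSpace α]
    {μ : Measure α} [IsFiniteMeasure μ] {X : α → ℝ} (hXi : Integrable X μ)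
    (hXe : Integrable (fun a => exp (X a)) μ) :
    exp (∫ a, X a ∂μ) * (μ.real Set.univ * (1 - ∫ a, X a ∂μ) + ∫ a, X a ∂μ)
      ≤ ∫ a, exp (X a) ∂μ := by
  set I := ∫ a, X a ∂μ
  have hcentered : Integrable (fun a => X a - I) μ := hXi.sub (integrable_const I)
  have htangent : Integrable (fun a => exp I * (1 + (X a - I))) μ :=
    ((integrable_const 1).add hcentered).const_mul _
  calc exp I * (μ.real Set.univ * (1 - I) + I) = ∫ a, exp I * (1 + (X a - I)) ∂μ := by
        rw [integral_const_mul, integral_add (integrable_const 1) hcentered,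
          integral_sub hXi (integrable_const I), integral_const, integral_const, smul_eq_mul,
          smul_eq_mul]
        ring
    _ ≤ ∫ a, exp (X a) ∂μ := integral_mono htangent hXe fun a => exp_mul_one_add_sub_le_exp I (X a)

theorem stmt12_general {α : Type*} [MeasurableSpace α] (μ : Measure α)
    (hμ : μ Set.univ ≤ 1)
    (X : α → ℝ) (hXi : Integrable X μ)
    (hXe : Integrable (fun a => Real.exp (X a)) μ) :
    Real.exp (∫ a, X a ∂μ) ≤ 1 + ∫ a, Real.exp (X a) ∂μ := by
  have : IsFiniteMeasure μ := ⟨hμ.trans_lt ENNReal.one_lt_top⟩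
  set I := ∫ a, X a ∂μ
  set m := μ.real Set.univ
  have hm0 : 0 ≤ m := measureReal_nonneg
  have hm1 : m ≤ 1 := ENNReal.toReal_le_of_le_ofReal zero_le_one (by simpa using hμ)
  have hdeficit : exp I * (1 - I) * (1 - m) ≤ 1 :=
    calc exp I * (1 - I) * (1 - m) ≤ 1 * (1 - m) :=
          mul_le_mul_of_nonneg_right (exp_mul_one_sub_le_one I) (by linarith)
      _ ≤ 1 := by linarith
  linarith [exp_integral_mul_le_integral_exp hXi hXe]

theorem stmt12 {α : Type*} [MeasurableSpace α] (μ : Measure α)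
    (hμ : μ Set.univ ≤ 1)
    (X : α → ℝ) (hX0 : ∀ a, 0 ≤ X a) (hXi : Integrable X μ)
    (hXe : Integrable (fun a => Real.exp (X a)) μ) :
    Real.exp (∫ a, X a ∂μ) ≤ 1 + ∫ a, Real.exp (X a) ∂μ :=
  stmt12_general μ hμ X hXi hXe
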